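/- arXiv:1709.05155 — 3 statements merged into one kernel-verified Lean document; each statement's English description precedes it below -/
import Mathlib

section
/- Suppose z(s,t) = βs + z̄(s,t) with z̄ ∈ C([0,T]; C^{1,α}(ℝ)) for some 0 < α < 1, β ∈ ℝ and T < ∞, and let c > 0. Then for each t ∈ [0,T] the weights Φ_±(·,·,t) belong to 𝒲⁰, and sup_{t∈[0,T]} ⦀Φ_±(·,·,t)⦀₀ < ∞. -/
noncomputable section

open Real MeasureTheory Filter Topology Set
open scoped ENNReal

/-- Symmetric principal value integral over `ℝ` (limit of `∫_{-R}^R` as `R → ∞`). -/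
def pvIntegral (g : ℝ → ℝ) : ℝ :=
  limUnder atTop fun R : ℝ => ∫ ξ in (-R)..R, g ξ

/-- The weighted singular integral operator `T_Φ`. -/
def TPhi (Φ : ℝ → ℝ → ℝ) (f : ℝ → ℝ) (s : ℝ) : ℝ :=
  (1 / (2 * π)) * pvIntegral fun ξ => (deriv f (s - ξ) - deriv f s) / ξ * Φ ξ s

/-- The weighted Hölder seminorm `[f]*_α`. -/
def starSemi (α : ℝ) (f : ℝ → ℝ) : ℝ≥0∞ :=
  ⨆ (s : ℝ) (ξ : {ξ : ℝ // |ξ| ≤ 1}),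
    ENNReal.ofReal ((1 + |s| ^ (1 + α)) * |f (s - ξ.1) - f s| / |ξ.1| ^ α)

/-- The weighted norm `‖f‖*_{k,α}`. -/
def starNorm (k : ℕ) (α : ℝ) (f : ℝ → ℝ) : ℝ≥0∞ :=
  (⨆ (s : ℝ) (j : Fin (k + 1)),
      ENNReal.ofReal ((1 + |s| ^ (1 + α)) * |iteratedDeriv j.1 f s|)) +
    starSemi α (iteratedDeriv k f)

/-- `f ∈ C^{k,α}_*(ℝ)`. -/
def MemCstar (k : ℕ) (α : ℝ) (f : ℝ → ℝ) : Prop :=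
  ContDiff ℝ k f ∧ starNorm k α f < ⊤

/-- Hölder seminorm in one variable. -/
def holderSlice (α : ℝ) (g : ℝ → ℝ) : ℝ≥0∞ :=
  ⨆ (s₁ : ℝ) (s₂ : ℝ), ENNReal.ofReal (|g s₁ - g s₂| / |s₁ - s₂| ^ α)

/-- The (unweighted) `C^{1,α}(ℝ)` norm. -/
def normC1Holder (α : ℝ) (f : ℝ → ℝ) : ℝ≥0∞ :=
  (⨆ s : ℝ, ENNReal.ofReal |f s|) + (⨆ s : ℝ, ENNReal.ofReal |deriv f s|) +
    holderSlice α (deriv f)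

/-- `f ∈ C^{1,α}(ℝ)` with finite norm. -/
def MemC1Holder (α : ℝ) (f : ℝ → ℝ) : Prop :=
  ContDiff ℝ 1 f ∧ normC1Holder α f < ⊤

/-- The filter `|ξ| → ∞` on `ℝ`. -/
def absAtTop : Filter ℝ := comap (fun ξ : ℝ => |ξ|) atTop

/-- `Φ^∞(s) = lim_{|ξ|→∞} Φ(ξ,s)`. -/
def PhiInf (Φ : ℝ → ℝ → ℝ) (s : ℝ) : ℝ := limUnder absAtTop fun ξ => Φ ξ s

/-- `Φ̄ = ξ (Φ - Φ^∞)`. -/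
def barPhi (Φ : ℝ → ℝ → ℝ) (ξ s : ℝ) : ℝ := ξ * (Φ ξ s - PhiInf Φ s)

/-- `Φ̃ = ξ ∂_ξ Φ - Φ`. -/
def tildePhi (Φ : ℝ → ℝ → ℝ) (ξ s : ℝ) : ℝ :=
  ξ * deriv (fun ξ' => Φ ξ' s) ξ - Φ ξ s

/-- The weight norm `⦀Φ⦀₀`. -/
def wNorm0 (Φ : ℝ → ℝ → ℝ) : ℝ≥0∞ :=
  (⨆ (s : ℝ) (ξ : {ξ : ℝ // |ξ| ≤ 1}), ENNReal.ofReal |Φ ξ.1 s|) +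
    ⨆ (s : ℝ) (ξ : {ξ : ℝ // 1 < |ξ|}),
      ENNReal.ofReal (|barPhi Φ ξ.1 s| + |tildePhi Φ ξ.1 s|)

/-- `Φ ∈ 𝒲⁰`. -/
def MemW0 (Φ : ℝ → ℝ → ℝ) : Prop :=
  (∃ M, ∀ ξ s, |Φ ξ s| ≤ M) ∧
  (∀ s, ∃ L, Tendsto (fun ξ => Φ ξ s) absAtTop (𝓝 L)) ∧
  (∀ s, ContDiffOn ℝ 1 (fun ξ => Φ ξ s) {(0 : ℝ)}ᶜ) ∧
  wNorm0 Φ < ⊤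

/-- `∂_s^j Φ`. -/
def dS (j : ℕ) (Φ : ℝ → ℝ → ℝ) : ℝ → ℝ → ℝ :=
  fun ξ s => iteratedDeriv j (fun s' => Φ ξ s') s

/-- Joint Hölder seminorm in `(ξ,s)`. -/
def holderJoint (α : ℝ) (Φ : ℝ → ℝ → ℝ) : ℝ≥0∞ :=
  ⨆ (p : ℝ × ℝ) (q : ℝ × ℝ),
    ENNReal.ofReal (|Φ p.1 p.2 - Φ q.1 q.2| / dist p q ^ α)

/-- The weight norm `⦀Φ⦀_{k,α}`. -/
def wNormK (k : ℕ) (α : ℝ) (Φ : ℝ → ℝ → ℝ) : ℝ≥0∞ :=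
  (⨆ j : Fin (k + 1), wNorm0 (dS j.1 Φ)) + holderJoint α (dS k Φ) +
    ⨆ ξ : {ξ : ℝ // 1 < |ξ|},
      (holderSlice α (fun s => barPhi (dS k Φ) ξ.1 s) +
        holderSlice α (fun s => tildePhi (dS k Φ) ξ.1 s))

/-- `Φ ∈ 𝒲^{k,α}`. -/
def MemWk (k : ℕ) (α : ℝ) (Φ : ℝ → ℝ → ℝ) : Prop :=
  (∀ j : Fin (k + 1), MemW0 (dS j.1 Φ)) ∧ wNormK k α Φ < ⊤

/-- `w ∈ C(S; C^{1,α}_*(ℝ))`, where `S ⊆ ℝ` is the time interval. -/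
def CstarFam (S : Set ℝ) (α : ℝ) (w : ℝ → ℝ → ℝ) : Prop :=
  (∀ t ∈ S, MemCstar 1 α fun s => w s t) ∧
    ∀ t₀ ∈ S, ∀ ε > (0 : ℝ), ∃ δ > (0 : ℝ), ∀ t ∈ S, |t - t₀| < δ →
      starNorm 1 α (fun s => w s t - w s t₀) ≤ ENNReal.ofReal ε

/-- `w ∈ C¹(S; C^{1,α}_*(ℝ))`. -/
def CstarFam1 (S : Set ℝ) (α : ℝ) (w : ℝ → ℝ → ℝ) : Prop :=
  CstarFam S α w ∧
    ∃ w' : ℝ → ℝ → ℝ, CstarFam S α w' ∧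
      ∀ (s : ℝ), ∀ t ∈ S, HasDerivWithinAt (fun τ => w s τ) (w' s t) S t

/-- `w ∈ C(S; C^{1,α}(ℝ))`. -/
def CplainFam (S : Set ℝ) (α : ℝ) (w : ℝ → ℝ → ℝ) : Prop :=
  (∀ t ∈ S, MemC1Holder α fun s => w s t) ∧
    ∀ t₀ ∈ S, ∀ ε > (0 : ℝ), ∃ δ > (0 : ℝ), ∀ t ∈ S, |t - t₀| < δ →
      normC1Holder α (fun s => w s t - w s t₀) ≤ ENNReal.ofReal ε

/-- Difference quotient `Z` associated to a profile `f`. -/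
def Zof (f : ℝ → ℝ) (ξ s : ℝ) : ℝ := (f s - f (s - ξ)) / ξ

/-- `Z_t(ξ,s) = (z(s,t) - z(s-ξ,t))/ξ`. -/
def Zfun (z : ℝ → ℝ → ℝ) (t ξ s : ℝ) : ℝ := Zof (fun s' => z s' t) ξ s

/-- `Φ₀(ξ,s) = 2ξ²/(ξ² + (z₀(s-ξ)-z₀(s))²)`. -/
def Phi0Of (z0 : ℝ → ℝ) (ξ s : ℝ) : ℝ :=
  2 * ξ ^ 2 / (ξ ^ 2 + (z0 (s - ξ) - z0 s) ^ 2)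

/-- `Φ₁ = -4 Z₀ Z₀' / (1+Z₀²)²`, where `Z₀'` is built from `z₁`. -/
def Phi1Of (z0 z1 : ℝ → ℝ) (ξ s : ℝ) : ℝ :=
  -4 * Zof z0 ξ s * Zof z1 ξ s / (1 + (Zof z0 ξ s) ^ 2) ^ 2

/-- `σ = (1-(∂_s z₀)²)/(1+(∂_s z₀)²)²`. -/
def sigmaOf (z0 : ℝ → ℝ) (s : ℝ) : ℝ :=
  (1 - (deriv z0 s) ^ 2) / (1 + (deriv z0 s) ^ 2) ^ 2

/-- The weights `Φ_±`: `e = 1` gives `Φ₊`, `e = -1` gives `Φ₋`. -/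
def PhiE (z : ℝ → ℝ → ℝ) (c e ξ s t : ℝ) : ℝ :=
  ξ ^ 2 / (ξ ^ 2 + (z (s - ξ) t - z s t) ^ 2) +
    ξ ^ 2 / (ξ ^ 2 + (z (s - ξ) t - z s t - e * (2 * c * t)) ^ 2)

/-- The normal interface velocity `u_ν^±` (`e = ±1`). -/
def uNuE (ρp ρm : ℝ) (z : ℝ → ℝ → ℝ) (c e s t : ℝ) : ℝ :=
  ((ρp - ρm) / (4 * π)) * pvIntegral fun ξ =>
    (deriv (fun s' => z s' t) (s - ξ) - deriv (fun s' => z s' t) s) / ξ *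
      PhiE z c e ξ s t

/-- The regular part `Δ_reg Φ`. -/
def DeltaReg (z : ℝ → ℝ → ℝ) (c ξ s t : ℝ) : ℝ :=
  ((Zfun z 0 ξ s) ^ 2 - (Zfun z t ξ s) ^ 2) / (2 * (1 + (Zfun z 0 ξ s) ^ 2)) *
    (2 / (1 + (Zfun z t ξ s) ^ 2) +
      1 / (1 + (Zfun z t ξ s + 2 * c * t / ξ) ^ 2) +
      1 / (1 + (Zfun z t ξ s - 2 * c * t / ξ) ^ 2))

/-- The singular part `Δ_sing Φ`. -/
def DeltaSing (z : ℝ → ℝ → ℝ) (c ξ s t : ℝ) : ℝ :=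
  (1 / (1 + (Zfun z 0 ξ s) ^ 2)) *
    ((-(2 * c * t * Zfun z t ξ s * ξ) - 2 * c ^ 2 * t ^ 2) /
        (ξ ^ 2 + (Zfun z t ξ s * ξ + 2 * c * t) ^ 2) +
      (2 * c * t * Zfun z t ξ s * ξ - 2 * c ^ 2 * t ^ 2) /
        (ξ ^ 2 + (Zfun z t ξ s * ξ - 2 * c * t) ^ 2))

/-- The weights `Φ_{i,j}` for the multi-interface construction. -/
def PhiIJ (z : ℝ → ℝ → ℝ) (ci cj ξ s t : ℝ) : ℝ :=
  ξ ^ 2 / (ξ ^ 2 + (z (s - ξ) t - z s t - (ci - cj) * t) ^ 2) +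
    ξ ^ 2 / (ξ ^ 2 + (z (s - ξ) t - z s t - (ci + cj) * t) ^ 2)

/-- The normal velocity `u_ν^{(i)}` on the interface with speed `ci`. -/
def uNuI (z : ℝ → ℝ → ℝ) (cs : ℕ → ℝ) (N : ℕ) (ci s t : ℝ) : ℝ :=
  ∑ j ∈ Finset.Icc 1 N, (1 / (2 * π * (N : ℝ))) *
    pvIntegral fun ξ =>
      (deriv (fun s' => z s' t) (s - ξ) - deriv (fun s' => z s' t) s) / ξ *
        PhiIJ z ci (cs j) ξ s t

/-! ### The IPM system (time is the first coordinate of space-time `ℝ × ℝ × ℝ`) -/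

/-- Euclidean inner product on `ℝ²`. -/
def dot2 (a b : ℝ × ℝ) : ℝ := a.1 * b.1 + a.2 * b.2

/-- `v^⊥ = (-v₂, v₁)`. -/
def perp (v : ℝ × ℝ) : ℝ × ℝ := (-v.2, v.1)

/-- Euclidean norm on `ℝ²`. -/
def norm2 (v : ℝ × ℝ) : ℝ := Real.sqrt (v.1 ^ 2 + v.2 ^ 2)

/-- Spatial gradient of a space-time test function. -/
def gradX (φ : ℝ × ℝ × ℝ → ℝ) (p : ℝ × ℝ × ℝ) : ℝ × ℝ :=
  (fderiv ℝ φ p (0, 1, 0), fderiv ℝ φ p (0, 0, 1))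

/-- Gradient of a spatial test function. -/
def gradS (ψ : ℝ × ℝ → ℝ) (x : ℝ × ℝ) : ℝ × ℝ :=
  (fderiv ℝ ψ x (1, 0), fderiv ℝ ψ x (0, 1))

/-- Space-time test function on `[0,T) × ℝ²`. -/
def IsTest (T : ℝ) (φ : ℝ × ℝ × ℝ → ℝ) : Prop :=
  ContDiff ℝ (⊤ : ℕ∞) φ ∧ HasCompactSupport φ ∧ ∀ p : ℝ × ℝ × ℝ, T ≤ p.1 → φ p = 0

open scoped Classical in
/-- The Muskat initial datum determined by the interface `z₀` and `ρ⁺, ρ⁻`. -/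
def muskat (z0 : ℝ → ℝ) (ρp ρm : ℝ) : ℝ × ℝ → ℝ := fun x =>
  if z0 x.1 < x.2 then ρp else ρm

open scoped Classical in
/-- Piecewise constant density with mixing zone `{|x₂ - z(x₁,t)| < ct}`. -/
def pieceDensity (z : ℝ → ℝ → ℝ) (c ρp ρm : ℝ) : ℝ → ℝ × ℝ → ℝ := fun t x =>
  if z x.1 t + c * t < x.2 then ρp else if x.2 < z x.1 t - c * t then ρm else 0

/-- Open space-time slab `(0,T) × ℝ²`. -/
def spaceTime (T : ℝ) : Set (ℝ × ℝ × ℝ) := Ioo 0 T ×ˢ (univ : Set (ℝ × ℝ))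

/-- Weak solution of the IPM system on `ℝ² × [0,T)` with initial datum `ρ₀`. -/
structure IsWeakSol (T : ℝ) (ρ₀ : ℝ × ℝ → ℝ) (ρ : ℝ → ℝ × ℝ → ℝ)
    (u : ℝ → ℝ × ℝ → ℝ × ℝ) : Prop where
  meas_ρ : Measurable fun p : ℝ × ℝ × ℝ => ρ p.1 p.2
  meas_u : Measurable fun p : ℝ × ℝ × ℝ => u p.1 p.2
  bdd : ∃ M, ∀ t x, |ρ t x| + norm2 (u t x) ≤ M
  transport : ∀ φ : ℝ × ℝ × ℝ → ℝ, IsTest T φ →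
    (∫ p in spaceTime T,
        ρ p.1 p.2 * (fderiv ℝ φ p (1, 0, 0) + dot2 (u p.1 p.2) (gradX φ p))) +
      (∫ x : ℝ × ℝ, φ (0, x) * ρ₀ x) = 0
  divfree : ∀ᵐ t ∂(volume.restrict (Ioo (0 : ℝ) T)),
    ∀ ψ : ℝ × ℝ → ℝ, ContDiff ℝ (⊤ : ℕ∞) ψ → HasCompactSupport ψ →
      (∫ x : ℝ × ℝ, dot2 (u t x) (gradS ψ x)) = 0
  darcy : ∀ᵐ t ∂(volume.restrict (Ioo (0 : ℝ) T)),
    ∀ ψ : ℝ × ℝ → ℝ, ContDiff ℝ (⊤ : ℕ∞) ψ → HasCompactSupport ψ →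
      (∫ x : ℝ × ℝ, dot2 (u t x + ((0 : ℝ), ρ t x)) (perp (gradS ψ x))) = 0

/-- Admissibility: `ρ ∈ [min(a,b), max(a,b)]` a.e. in space-time. -/
def AdmissibleBetween (T a b : ℝ) (ρ : ℝ → ℝ × ℝ → ℝ) : Prop :=
  ∀ᵐ p : ℝ × ℝ × ℝ ∂(volume.restrict (spaceTime T)),
    ρ p.1 p.2 ∈ Icc (min a b) (max a b)

/-- Admissible subsolution of the IPM system on `ℝ² × [0,T)` (normalized `ρ± = ±1`). -/
structure IsSubsolution (T : ℝ) (ρ₀ : ℝ × ℝ → ℝ) (ρ : ℝ → ℝ × ℝ → ℝ)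
    (u m : ℝ → ℝ × ℝ → ℝ × ℝ) (Ωp Ωm Ωmix : Set (ℝ × ℝ × ℝ)) : Prop where
  openP : ∃ U : Set (ℝ × ℝ × ℝ), IsOpen U ∧ Ωp = U ∩ (Ico 0 T ×ˢ (univ : Set (ℝ × ℝ)))
  openM : ∃ U : Set (ℝ × ℝ × ℝ), IsOpen U ∧ Ωm = U ∩ (Ico 0 T ×ˢ (univ : Set (ℝ × ℝ)))
  openMix : ∃ U : Set (ℝ × ℝ × ℝ), IsOpen U ∧ Ωmix = U ∩ (Ico 0 T ×ˢ (univ : Set (ℝ × ℝ)))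
  cover : (Ico 0 T ×ˢ (univ : Set (ℝ × ℝ))) ⊆ closure Ωp ∪ closure Ωm ∪ Ωmix
  meas : Measurable fun p : ℝ × ℝ × ℝ => (ρ p.1 p.2, u p.1 p.2, m p.1 p.2)
  bdd : ∃ M, ∀ t x, |ρ t x| + norm2 (u t x) + norm2 (m t x) ≤ M
  transport : ∀ φ : ℝ × ℝ × ℝ → ℝ, IsTest T φ →
    (∫ p in spaceTime T,
        (ρ p.1 p.2 * fderiv ℝ φ p (1, 0, 0) + dot2 (m p.1 p.2) (gradX φ p))) +
      (∫ x : ℝ × ℝ, φ (0, x) * ρ₀ x) = 0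
  divfree : ∀ᵐ t ∂(volume.restrict (Ioo (0 : ℝ) T)),
    ∀ ψ : ℝ × ℝ → ℝ, ContDiff ℝ (⊤ : ℕ∞) ψ → HasCompactSupport ψ →
      (∫ x : ℝ × ℝ, dot2 (u t x) (gradS ψ x)) = 0
  darcy : ∀ᵐ t ∂(volume.restrict (Ioo (0 : ℝ) T)),
    ∀ ψ : ℝ × ℝ → ℝ, ContDiff ℝ (⊤ : ℕ∞) ψ → HasCompactSupport ψ →
      (∫ x : ℝ × ℝ, dot2 (u t x + ((0 : ℝ), ρ t x)) (perp (gradS ψ x))) = 0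
  constraint : ∀ᵐ p : ℝ × ℝ × ℝ ∂(volume.restrict (spaceTime T)),
    norm2 (m p.1 p.2 - ρ p.1 p.2 • u p.1 p.2 + ((0 : ℝ), (1 - (ρ p.1 p.2) ^ 2) / 2)) ≤
      (1 - (ρ p.1 p.2) ^ 2) / 2
  pureFluid : ∀ p ∈ Ωp ∪ Ωm, |ρ p.1 p.2| = 1
  contMix : ContinuousOn (fun p : ℝ × ℝ × ℝ => (ρ p.1 p.2, u p.1 p.2, m p.1 p.2)) Ωmix
  strictMix : ∀ p ∈ Ωmix,
    norm2 (m p.1 p.2 - ρ p.1 p.2 • u p.1 p.2 + ((0 : ℝ), (1 - (ρ p.1 p.2) ^ 2) / 2)) <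
      (1 - (ρ p.1 p.2) ^ 2) / 2

/-- Euclidean space-time ball `B_r(x₀,t₀)` (time is the first coordinate). -/
def ball3 (t₀ : ℝ) (x₀ : ℝ × ℝ) (r : ℝ) : Set (ℝ × ℝ × ℝ) :=
  {p | (p.1 - t₀) ^ 2 + (p.2.1 - x₀.1) ^ 2 + (p.2.2 - x₀.2) ^ 2 < r ^ 2}

/-- The mixing property of a density inside the mixing zone. -/
def MixingProp (T : ℝ) (Ωmix : Set (ℝ × ℝ × ℝ)) (ρ : ℝ → ℝ × ℝ → ℝ) : Prop :=
  ∀ r > (0 : ℝ), ∀ t₀ ∈ Ioo (0 : ℝ) T, ∀ x₀ : ℝ × ℝ, ball3 t₀ x₀ r ⊆ Ωmix →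
    0 < volume {p ∈ ball3 t₀ x₀ r | ρ p.1 p.2 = 1} ∧
    0 < volume {p ∈ ball3 t₀ x₀ r | ρ p.1 p.2 = -1}

/-!
Writing `z(s-ξ,t) - z(s,t) = u(ξ) - βξ` with `u(ξ) = z̄(s-ξ,t) - z̄(s,t)`, each summand of `Φ_±`
is `ξ²/(ξ² + (u(ξ) - βξ)²) = 1/(1 + (u(ξ)/ξ - β)²)`, where `u` (shifted by `0` or `±2ct`) is
bounded by `2‖z̄‖_∞ + 2|c|T` and has derivative bounded by `‖∂_s z̄‖_∞`. Such a weight lies in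
`[0,1]`, tends to `1/(1+β²)` as `|ξ| → ∞`, and for `|ξ| ≥ 1` both `ξ(Φ - Φ^∞)` and `ξ ∂_ξ Φ` are
bounded in terms of `β` and these two bounds only. These are uniform in `t`, since a continuous
map `[0,T] → C^{1,α}` has bounded image.
-/

instance absAtTop_neBot : absAtTop.NeBot :=
  comap_neBot fun _ ht =>
    let ⟨b, hb⟩ := mem_atTop_sets.mp ht
    ⟨|b|, hb _ (by rw [abs_abs]; exact le_abs_self b)⟩

lemma tendsto_abs_absAtTop : Tendsto (fun ξ : ℝ => |ξ|) absAtTop atTop :=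
  tendsto_comap

lemma eventually_ne_zero_absAtTop : ∀ᶠ ξ : ℝ in absAtTop, ξ ≠ 0 :=
  (tendsto_abs_absAtTop.eventually_gt_atTop 0).mono fun _ h => abs_pos.mp h

def lorentzWeight (β : ℝ) (u : ℝ → ℝ) (ξ : ℝ) : ℝ :=
  ξ ^ 2 / (ξ ^ 2 + (u ξ - β * ξ) ^ 2)

section lorentzWeight

variable {β U V ξ : ℝ} {u : ℝ → ℝ}

lemma abs_lorentzWeight_le_one : |lorentzWeight β u ξ| ≤ 1 := by
  rw [lorentzWeight, abs_of_nonneg (by positivity)]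
  exact div_le_one_of_le₀ (le_add_of_nonneg_right (sq_nonneg _)) (by positivity)

lemma lorentzWeight_eq_of_ne_zero (hξ : ξ ≠ 0) :
    lorentzWeight β u ξ = 1 / (1 + (u ξ / ξ - β) ^ 2) := by
  rw [lorentzWeight]
  field_simp

lemma tendsto_lorentzWeight (hu : ∀ ξ, |u ξ| ≤ U) :
    Tendsto (lorentzWeight β u) absAtTop (𝓝 (1 / (1 + β ^ 2))) := by
  have hquot : Tendsto (fun ξ => u ξ / ξ) absAtTop (𝓝 0) := by
    refine squeeze_zero_norm' ?_
      ((tendsto_const_nhds (x := U)).div_atTop tendsto_abs_absAtTop)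
    filter_upwards [eventually_ne_zero_absAtTop] with ξ hξ
    rw [Real.norm_eq_abs, abs_div]
    exact div_le_div_of_nonneg_right (hu ξ) (abs_nonneg ξ)
  have hcont : Continuous fun w : ℝ => 1 / (1 + (w - β) ^ 2) :=
    continuous_const.div (by fun_prop) fun w => by positivity
  have := (hcont.tendsto 0).comp hquot
  simp only [zero_sub, neg_sq] at this
  refine this.congr' ?_
  filter_upwards [eventually_ne_zero_absAtTop] with ξ hξ
  exact (lorentzWeight_eq_of_ne_zero hξ).symm

lemma abs_mul_lorentzWeight_sub_le (hξ : 1 ≤ |ξ|) (hu : |u ξ| ≤ U) :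
    |ξ * (lorentzWeight β u ξ - 1 / (1 + β ^ 2))| ≤ U * (2 * |β| + U) := by
  have hξ0 : ξ ≠ 0 := abs_pos.mp (one_pos.trans_le hξ)
  have hquot : |u ξ / ξ| ≤ U := by
    rw [abs_div]
    exact (div_le_self (abs_nonneg _) hξ).trans hu
  -- With `w = u ξ / ξ - β`, `1/(1+w²) - 1/(1+β²)` has the factor `β + w = u ξ / ξ`, cancelling `ξ`.
  have key : ξ * (lorentzWeight β u ξ - 1 / (1 + β ^ 2)) =
      (2 * β - u ξ / ξ) * u ξ / ((1 + (u ξ / ξ - β) ^ 2) * (1 + β ^ 2)) := by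
    rw [lorentzWeight_eq_of_ne_zero hξ0]
    field_simp
    ring
  have hden : 1 ≤ (1 + (u ξ / ξ - β) ^ 2) * (1 + β ^ 2) :=
    one_le_mul_of_one_le_of_one_le (by nlinarith) (by nlinarith)
  rw [key, abs_div, abs_of_pos (one_pos.trans_le hden)]
  calc |(2 * β - u ξ / ξ) * u ξ| / ((1 + (u ξ / ξ - β) ^ 2) * (1 + β ^ 2))
      ≤ |2 * β - u ξ / ξ| * |u ξ| := by
        rw [← abs_mul]; exact div_le_self (abs_nonneg _) hden
    _ ≤ (2 * |β| + U) * U := by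
        refine mul_le_mul ?_ hu (abs_nonneg _) (by linarith [abs_nonneg β, abs_nonneg (u ξ)])
        calc |2 * β - u ξ / ξ| ≤ |2 * β| + |u ξ / ξ| := abs_sub _ _
          _ ≤ 2 * |β| + U := by rw [abs_mul, abs_two]; linarith
    _ = U * (2 * |β| + U) := mul_comm _ _

-- The linear part drops out of the last factor: `q - ξ q' = u - ξ u'` for `q = u - βξ`.
lemma hasDerivAt_lorentzWeight {u' : ℝ} (hu : HasDerivAt u u' ξ) (hξ : ξ ≠ 0) :
    HasDerivAt (lorentzWeight β u)
      (2 * ξ * (u ξ - β * ξ) * (u ξ - ξ * u') / (ξ ^ 2 + (u ξ - β * ξ) ^ 2) ^ 2) ξ := by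
  have hD : ξ ^ 2 + (u ξ - β * ξ) ^ 2 ≠ 0 := by positivity
  have hsq : HasDerivAt (fun x => x ^ 2) (2 * ξ) ξ := by simpa using hasDerivAt_pow 2 ξ
  have hq : HasDerivAt (fun x => u x - β * x) (u' - β) ξ := by
    simpa using hu.fun_sub ((hasDerivAt_id ξ).const_mul β)
  refine (hsq.fun_div (hsq.fun_add (hq.fun_pow 2)) hD).congr_deriv ?_
  field_simp
  ring

lemma abs_mul_deriv_lorentzWeight_le {u' : ℝ} (hu : HasDerivAt u u' ξ) (hξ : 1 ≤ |ξ|)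
    (hU : |u ξ| ≤ U) (hV : |u'| ≤ V) :
    |ξ * deriv (lorentzWeight β u) ξ| ≤ U + V := by
  have hξ0 : ξ ≠ 0 := abs_pos.mp (one_pos.trans_le hξ)
  rw [(hasDerivAt_lorentzWeight hu hξ0).deriv]
  set q := u ξ - β * ξ
  set D := ξ ^ 2 + q ^ 2
  have hD : 0 < D := by positivity
  have hsqD : ξ ^ 2 ≤ D := le_add_of_nonneg_right (sq_nonneg q)
  have hamgm : 2 * |ξ| * |q| ≤ D := by
    have := two_mul_le_add_sq |ξ| |q|
    rwa [sq_abs, sq_abs] at this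
  have hnum : |ξ| * |u ξ - ξ * u'| ≤ D * (U + V) := by
    have : |u ξ - ξ * u'| ≤ |ξ| * (U + V) := by
      calc |u ξ - ξ * u'| ≤ |u ξ| + |ξ| * |u'| := by rw [← abs_mul]; exact abs_sub _ _
        _ ≤ |ξ| * U + |ξ| * V := by
            gcongr; exact hU.trans (le_mul_of_one_le_left (by linarith [abs_nonneg (u ξ)]) hξ)
        _ = |ξ| * (U + V) := by ring
    calc |ξ| * |u ξ - ξ * u'| ≤ |ξ| * (|ξ| * (U + V)) := by gcongr
      _ = ξ ^ 2 * (U + V) := by rw [← mul_assoc, ← sq, sq_abs]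
      _ ≤ D * (U + V) := by gcongr; linarith [abs_nonneg (u ξ), abs_nonneg u']
  rw [show ξ * (2 * ξ * q * (u ξ - ξ * u') / D ^ 2) = (2 * ξ * q) * (ξ * (u ξ - ξ * u')) / D ^ 2
    by ring, abs_div, abs_mul, abs_mul, abs_mul, abs_mul, abs_two, abs_of_pos (pow_pos hD 2),
    div_le_iff₀ (pow_pos hD 2)]
  calc 2 * |ξ| * |q| * (|ξ| * |u ξ - ξ * u'|) ≤ D * (D * (U + V)) :=
        mul_le_mul hamgm hnum (by positivity) hD.le
    _ = (U + V) * D ^ 2 := by ring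

lemma contDiffOn_lorentzWeight (hu : ContDiff ℝ 1 u) :
    ContDiffOn ℝ 1 (lorentzWeight β u) {0}ᶜ :=
  (contDiff_id.pow 2).contDiffOn.div ((contDiff_id.pow 2).add
    ((hu.sub (contDiff_const.mul contDiff_id)).pow 2)).contDiffOn fun ξ (hξ : ξ ≠ 0) => by
      positivity

end lorentzWeight

lemma memW0_of_bounds {Φ : ℝ → ℝ → ℝ} {L : ℝ → ℝ} {A B C : ℝ}
    (hbdd : ∀ ξ s, |Φ ξ s| ≤ A)
    (hlim : ∀ s, Tendsto (fun ξ => Φ ξ s) absAtTop (𝓝 (L s)))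
    (hC1 : ∀ s, ContDiffOn ℝ 1 (fun ξ => Φ ξ s) {0}ᶜ)
    (hbar : ∀ s ξ, 1 < |ξ| → |ξ * (Φ ξ s - L s)| ≤ B)
    (htilde : ∀ s ξ, 1 < |ξ| → |tildePhi Φ ξ s| ≤ C) :
    MemW0 Φ ∧ wNorm0 Φ ≤ ENNReal.ofReal (A + (B + C)) := by
  have h2 : 1 < |(2 : ℝ)| := by norm_num
  have hA : 0 ≤ A := (abs_nonneg _).trans (hbdd 0 0)
  have hB : 0 ≤ B := (abs_nonneg _).trans (hbar 0 2 h2)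
  have hC : 0 ≤ C := (abs_nonneg _).trans (htilde 0 2 h2)
  have hnorm : wNorm0 Φ ≤ ENNReal.ofReal (A + (B + C)) := by
    rw [ENNReal.ofReal_add hA (by positivity)]
    refine add_le_add (iSup₂_le fun s ξ => ENNReal.ofReal_le_ofReal (hbdd _ _))
      (iSup₂_le fun s ξ => ENNReal.ofReal_le_ofReal (add_le_add ?_ (htilde s ξ ξ.2)))
    rw [barPhi, PhiInf, (hlim s).limUnder_eq]
    exact hbar s ξ ξ.2
  exact ⟨⟨⟨A, hbdd⟩, fun s => ⟨L s, hlim s⟩, hC1, hnorm.trans_lt ENNReal.ofReal_lt_top⟩, hnorm⟩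

lemma abs_le_of_normC1Holder_le {α C : ℝ} {f : ℝ → ℝ}
    (h : normC1Holder α f ≤ ENNReal.ofReal C) (hC : 0 ≤ C) (s : ℝ) :
    |f s| ≤ C ∧ |deriv f s| ≤ C := by
  rw [← ENNReal.ofReal_le_ofReal_iff hC, ← ENNReal.ofReal_le_ofReal_iff hC]
  refine ⟨le_trans ?_ h, le_trans ?_ h⟩ <;> unfold normC1Holder
  · exact (le_iSup (fun s => ENNReal.ofReal |f s|) s).trans (le_self_add.trans le_self_add)
  · exact (le_iSup (fun s => ENNReal.ofReal |deriv f s|) s).trans (le_add_self.trans le_self_add)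

lemma CplainFam.exists_bound {S : Set ℝ} {α : ℝ} {w : ℝ → ℝ → ℝ}
    (hw : CplainFam S α w) (hS : IsCompact S) :
    ∃ K, ∀ t ∈ S, ∀ s, |w s t| ≤ K ∧ |deriv (fun s => w s t) s| ≤ K := by
  refine hS.induction_on
    (p := fun A => ∃ K, ∀ t ∈ A, ∀ s, |w s t| ≤ K ∧ |deriv (fun s => w s t) s| ≤ K)
    ⟨0, by simp⟩ (fun A B hAB ⟨K, hK⟩ => ⟨K, fun t ht => hK t (hAB ht)⟩) ?_ ?_
  · rintro A B ⟨K₁, hK₁⟩ ⟨K₂, hK₂⟩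
    refine ⟨max K₁ K₂, fun t ht s => ?_⟩
    rcases ht with ht | ht
    · exact (hK₁ t ht s).imp (le_max_of_le_left ·) (le_max_of_le_left ·)
    · exact (hK₂ t ht s).imp (le_max_of_le_right ·) (le_max_of_le_right ·)
  intro t₀ ht₀
  obtain ⟨δ, hδ, hnear⟩ := hw.2 t₀ ht₀ 1 one_pos
  set N := (normC1Holder α fun s => w s t₀).toReal
  have hN : ∀ s, |w s t₀| ≤ N ∧ |deriv (fun s => w s t₀) s| ≤ N :=
    abs_le_of_normC1Holder_le (ENNReal.ofReal_toReal (hw.1 t₀ ht₀).2.ne).ge ENNReal.toReal_nonneg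
  refine ⟨S ∩ Metric.ball t₀ δ, inter_mem_nhdsWithin _ (Metric.ball_mem_nhds _ hδ), 1 + N, ?_⟩
  rintro t ⟨ht, htδ⟩ s
  have hdiff := abs_le_of_normC1Holder_le (hnear t ht htδ) zero_le_one s
  have hderiv : deriv (fun s => w s t - w s t₀) s =
      deriv (fun s => w s t) s - deriv (fun s => w s t₀) s :=
    deriv_sub ((hw.1 t ht).1.differentiable one_ne_zero s)
      ((hw.1 t₀ ht₀).1.differentiable one_ne_zero s)
  rw [hderiv] at hdiff
  constructor
  · calc |w s t| ≤ |w s t - w s t₀| + |w s t₀| := sub_le_iff_le_add.mp (abs_sub_abs_le_abs_sub _ _)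
      _ ≤ 1 + N := add_le_add hdiff.1 (hN s).1
  · calc |deriv (fun s => w s t) s| ≤
          |deriv (fun s => w s t) s - deriv (fun s => w s t₀) s| + |deriv (fun s => w s t₀) s| :=
          sub_le_iff_le_add.mp (abs_sub_abs_le_abs_sub _ _)
      _ ≤ 1 + N := add_le_add hdiff.2 (hN s).2

lemma hasDerivAt_sub_comp_sub {h : ℝ → ℝ} (hh : Differentiable ℝ h) (s c x : ℝ) :
    HasDerivAt (fun x => h (s - x) - h s - c) (-deriv h (s - x)) x := by
  simpa using ((hh (s - x)).hasDerivAt.comp x ((hasDerivAt_id x).const_sub s)).sub_const (h s)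
    |>.sub_const c

lemma abs_sub_comp_sub_le {h : ℝ → ℝ} {K c D : ℝ} (hK : ∀ s, |h s| ≤ K) (hc : |c| ≤ D)
    (s x : ℝ) : |h (s - x) - h s - c| ≤ 2 * K + D := by
  have := hK (s - x); have := hK s
  calc |h (s - x) - h s - c| ≤ |h (s - x)| + |h s| + |c| :=
        (abs_sub _ _).trans (add_le_add (abs_sub _ _) le_rfl)
    _ ≤ 2 * K + D := by linarith

def lorentzPair (β : ℝ) (h : ℝ → ℝ) (a b ξ s : ℝ) : ℝ :=
  lorentzWeight β (fun x => h (s - x) - h s - a) ξ +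
    lorentzWeight β (fun x => h (s - x) - h s - b) ξ

lemma memW0_lorentzPair {β K D a b : ℝ} {h : ℝ → ℝ} (hh : ContDiff ℝ 1 h)
    (hK : ∀ s, |h s| ≤ K) (hK' : ∀ s, |deriv h s| ≤ K) (ha : |a| ≤ D) (hb : |b| ≤ D) :
    MemW0 (lorentzPair β h a b) ∧ wNorm0 (lorentzPair β h a b) ≤ ENNReal.ofReal
      (2 + (2 * ((2 * K + D) * (2 * |β| + (2 * K + D))) + (2 * (2 * K + D + K) + 2))) := by
  have hderiv := hasDerivAt_sub_comp_sub (hh.differentiable one_ne_zero)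
  have hC1 (s c : ℝ) : ContDiff ℝ 1 (fun x => h (s - x) - h s - c) :=
    ((hh.comp (contDiff_const.sub contDiff_id)).sub contDiff_const).sub contDiff_const
  have hbdd (ξ s : ℝ) : |lorentzPair β h a b ξ s| ≤ 2 :=
    (abs_add_le _ _).trans
      ((add_le_add abs_lorentzWeight_le_one abs_lorentzWeight_le_one).trans_eq one_add_one_eq_two)
  refine memW0_of_bounds (L := fun _ => 1 / (1 + β ^ 2) + 1 / (1 + β ^ 2)) hbdd
    (fun s => (tendsto_lorentzWeight (abs_sub_comp_sub_le hK ha s)).add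
      (tendsto_lorentzWeight (abs_sub_comp_sub_le hK hb s)))
    (fun s => (contDiffOn_lorentzWeight (hC1 s a)).add (contDiffOn_lorentzWeight (hC1 s b)))
    (fun s ξ hξ => ?_) (fun s ξ hξ => ?_)
  · have h₁ := abs_mul_lorentzWeight_sub_le (β := β) (u := fun x => h (s - x) - h s - a) hξ.le
      (abs_sub_comp_sub_le hK ha s ξ)
    have h₂ := abs_mul_lorentzWeight_sub_le (β := β) (u := fun x => h (s - x) - h s - b) hξ.le
      (abs_sub_comp_sub_le hK hb s ξ)
    rw [lorentzPair, show ∀ x y l : ℝ, ξ * (x + y - (l + l)) = ξ * (x - l) + ξ * (y - l) from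
      fun _ _ _ => by ring]
    exact (abs_add_le _ _).trans (by linarith)
  · have hξ0 : ξ ≠ 0 := abs_pos.mp (one_pos.trans hξ)
    have hV : |-deriv h (s - ξ)| ≤ K := (abs_neg _).trans_le (hK' _)
    have h₁ := abs_mul_deriv_lorentzWeight_le (β := β) (hderiv s a ξ) hξ.le
      (abs_sub_comp_sub_le hK ha s ξ) hV
    have h₂ := abs_mul_deriv_lorentzWeight_le (β := β) (hderiv s b ξ) hξ.le
      (abs_sub_comp_sub_le hK hb s ξ) hV
    have hsum : deriv (fun ξ' => lorentzPair β h a b ξ' s) ξ =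
        deriv (lorentzWeight β fun x => h (s - x) - h s - a) ξ +
          deriv (lorentzWeight β fun x => h (s - x) - h s - b) ξ :=
      deriv_add (hasDerivAt_lorentzWeight (hderiv s a ξ) hξ0).differentiableAt
        (hasDerivAt_lorentzWeight (hderiv s b ξ) hξ0).differentiableAt
    rw [tildePhi, hsum, mul_add]
    refine (abs_sub _ _).trans ((add_le_add (abs_add_le _ _) (hbdd ξ s)).trans ?_)
    linarith

lemma PhiE_eq_lorentzPair {β c e t : ℝ} {z zbar : ℝ → ℝ → ℝ}
    (hsplit : ∀ s t, z s t = β * s + zbar s t) :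
    (fun ξ s => PhiE z c e ξ s t) = lorentzPair β (fun s => zbar s t) 0 (e * (2 * c * t)) := by
  ext ξ s
  simp only [PhiE, lorentzPair, lorentzWeight, hsplit]
  ring_nf

theorem PhiPM_mem_W0_uniform_general
    (α β T c : ℝ)
    (z zbar : ℝ → ℝ → ℝ)
    (hsplit : ∀ s t, z s t = β * s + zbar s t)
    (hreg : CplainFam (Icc 0 T) α zbar) :
    (∀ t ∈ Icc (0 : ℝ) T, ∀ e : ℝ, e = 1 ∨ e = -1 →
        MemW0 fun ξ s => PhiE z c e ξ s t) ∧
      ∃ M : ℝ, ∀ t ∈ Icc (0 : ℝ) T, ∀ e : ℝ, e = 1 ∨ e = -1 →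
        wNorm0 (fun ξ s => PhiE z c e ξ s t) ≤ ENNReal.ofReal M := by
  obtain ⟨K, hK⟩ := hreg.exists_bound isCompact_Icc
  set D := 2 * |c| * T
  have key : ∀ t ∈ Icc (0 : ℝ) T, ∀ e : ℝ, e = 1 ∨ e = -1 →
      MemW0 (fun ξ s => PhiE z c e ξ s t) ∧ wNorm0 (fun ξ s => PhiE z c e ξ s t) ≤
        ENNReal.ofReal
          (2 + (2 * ((2 * K + D) * (2 * |β| + (2 * K + D))) + (2 * (2 * K + D + K) + 2))) := by
    intro t ht e he
    have he1 : |e| = 1 := by rcases he with rfl | rfl <;> norm_num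
    have hshift : |e * (2 * c * t)| ≤ D := by
      rw [abs_mul, he1, one_mul, abs_mul, abs_mul, abs_two, abs_of_nonneg ht.1]
      exact mul_le_mul_of_nonneg_left ht.2 (by positivity)
    rw [PhiE_eq_lorentzPair hsplit]
    exact memW0_lorentzPair (hreg.1 t ht).1 (fun s => (hK t ht s).1) (fun s => (hK t ht s).2)
      (abs_zero.trans_le ((abs_nonneg _).trans hshift)) hshift
  exact ⟨fun t ht e he => (key t ht e he).1, _, fun t ht e he => (key t ht e he).2⟩

/-- the weights `Φ_±` belong to `𝒲⁰`, uniformly for `t ∈ [0,T]`. -/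
theorem PhiPM_mem_W0_uniform
    (α β T c : ℝ) (hα : 0 < α) (hα1 : α < 1) (hT : 0 < T) (hc : 0 < c)
    (z zbar : ℝ → ℝ → ℝ)
    (hsplit : ∀ s t, z s t = β * s + zbar s t)
    (hreg : CplainFam (Icc 0 T) α zbar) :
    (∀ t ∈ Icc (0 : ℝ) T, ∀ e : ℝ, e = 1 ∨ e = -1 →
        MemW0 fun ξ s => PhiE z c e ξ s t) ∧
      ∃ M : ℝ, ∀ t ∈ Icc (0 : ℝ) T, ∀ e : ℝ, e = 1 ∨ e = -1 →
        wNorm0 (fun ξ s => PhiE z c e ξ s t) ≤ ENNReal.ofReal M :=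
  PhiPM_mem_W0_uniform_general α β T c z zbar hsplit hreg
end
end

section
/- For any constants a ∈ ℝ and c > 0, (1/2π) PV ∫_ℝ [ (−2acξ − 2c²)/((1+a²)ξ² + 4acξ + 4c²) + (2acξ − 2c²)/((1+a²)ξ² − 4acξ + 4c²) ] dξ = −c·(1−a²)/(1+a²), the principal value taken as lim_{R→∞} ∫_{−R}^R. -/
noncomputable section

open Real MeasureTheory Filter Topology Set
open scoped ENNReal

/-! The second summand of the integrand is the first one evaluated at `-ξ`, so the symmetric
integral is twice that of `f ξ = (-(2acξ) - 2c²) / ((1 + a²) ξ² + 4acξ + 4c²)`. Completing the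
square writes `f ξ = (m ξ + r) / ((ξ - m)² + d²)` with `m = -2ac / (1 + a²)`,
`d = 2c / (1 + a²)`, `r = -2c² / (1 + a²)`. An antiderivative is
`(m / 2) log ((ξ - m)² + d²) + ((m² + r) / d) arctan ((ξ - m) / d)`: its logarithmic part cancels
between `R` and `-R` as `R → ∞`, and the arctangent part contributes `(m² + r) π / d`. -/

lemma sq_sub_add_sq_pos (ξ m : ℝ) {d : ℝ} (hd : d ≠ 0) : 0 < (ξ - m) ^ 2 + d ^ 2 := by
  positivity

lemma Continuous.div_sq_sub_add_sq {f : ℝ → ℝ} (hf : Continuous f) (m : ℝ) {d : ℝ}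
    (hd : d ≠ 0) : Continuous fun ξ : ℝ => f ξ / ((ξ - m) ^ 2 + d ^ 2) :=
  hf.div (by fun_prop) fun ξ => (sq_sub_add_sq_pos ξ m hd).ne'

lemma hasDerivAt_log_sq_sub_add_sq_div_two (m : ℝ) {d : ℝ} (hd : d ≠ 0) (ξ : ℝ) :
    HasDerivAt (fun x => log ((x - m) ^ 2 + d ^ 2) / 2)
      ((ξ - m) / ((ξ - m) ^ 2 + d ^ 2)) ξ := by
  have h := ((((hasDerivAt_id ξ).sub_const m).pow 2).add_const (d ^ 2)).log
    (sq_sub_add_sq_pos ξ m hd).ne' |>.div_const 2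
  refine h.congr_deriv ?_
  simp only [id, Pi.pow_apply]
  ring

lemma hasDerivAt_arctan_sub_div_div (m : ℝ) {d : ℝ} (hd : d ≠ 0) (ξ : ℝ) :
    HasDerivAt (fun x => arctan ((x - m) / d) / d) (1 / ((ξ - m) ^ 2 + d ^ 2)) ξ := by
  have h := ((((hasDerivAt_id ξ).sub_const m).div_const d).arctan).div_const d
  refine h.congr_deriv ?_
  simp only [id]
  field_simp
  ring

lemma tendsto_log_sq_sub_add_sq_sub_log_sq_add_add_sq (m : ℝ) {d : ℝ} (hd : d ≠ 0) :
    Tendsto (fun R : ℝ => log ((R - m) ^ 2 + d ^ 2) - log ((R + m) ^ 2 + d ^ 2)) atTop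
      (𝓝 0) := by
  -- factor out `R²` and pass to the variable `t = R⁻¹ → 0`
  set g : ℝ → ℝ := fun t =>
    log ((1 - m * t) ^ 2 + (d * t) ^ 2) - log ((1 + m * t) ^ 2 + (d * t) ^ 2)
  have hg : Tendsto g (𝓝 0) (𝓝 0) := by
    have hg_cont : ContinuousAt g 0 := by
      apply ContinuousAt.sub <;> apply ContinuousAt.log (by fun_prop) (by simp)
    simpa [g] using hg_cont.tendsto
  refine (hg.comp tendsto_inv_atTop_zero).congr' ?_
  filter_upwards [eventually_ne_atTop 0] with R hR
  have hfactor (s : ℝ) :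
      (R + s) ^ 2 + d ^ 2 = R ^ 2 * ((1 + s * R⁻¹) ^ 2 + (d * R⁻¹) ^ 2) := by
    field_simp
  have hpos (s : ℝ) : (1 + s * R⁻¹) ^ 2 + (d * R⁻¹) ^ 2 ≠ 0 := by
    positivity
  simp only [Function.comp, g, sub_eq_add_neg R m]
  rw [hfactor, hfactor, log_mul (by positivity) (hpos _), log_mul (by positivity) (hpos _)]
  ring_nf

theorem tendsto_integral_sub_div_sq_sub_add_sq (m : ℝ) {d : ℝ} (hd : d ≠ 0) :
    Tendsto (fun R : ℝ => ∫ ξ in (-R)..R, (ξ - m) / ((ξ - m) ^ 2 + d ^ 2)) atTop (𝓝 0) := by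
  have hint (R : ℝ) : ∫ ξ in (-R)..R, (ξ - m) / ((ξ - m) ^ 2 + d ^ 2) =
      (log ((R - m) ^ 2 + d ^ 2) - log ((R + m) ^ 2 + d ^ 2)) / 2 := by
    rw [intervalIntegral.integral_eq_sub_of_hasDerivAt
      (fun ξ _ => hasDerivAt_log_sq_sub_add_sq_div_two m hd ξ)
      (((continuous_sub_right m).div_sq_sub_add_sq m hd).intervalIntegrable _ _)]
    ring_nf
  simpa [hint] using (tendsto_log_sq_sub_add_sq_sub_log_sq_add_add_sq m hd).div_const 2

theorem tendsto_integral_one_div_sq_sub_add_sq (m : ℝ) {d : ℝ} (hd : 0 < d) :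
    Tendsto (fun R : ℝ => ∫ ξ in (-R)..R, 1 / ((ξ - m) ^ 2 + d ^ 2)) atTop (𝓝 (π / d)) := by
  have hint (R : ℝ) : ∫ ξ in (-R)..R, 1 / ((ξ - m) ^ 2 + d ^ 2) =
      (arctan ((R - m) / d) - arctan ((-R - m) / d)) / d := by
    rw [intervalIntegral.integral_eq_sub_of_hasDerivAt
      (fun ξ _ => hasDerivAt_arctan_sub_div_div m hd.ne' ξ)
      ((continuous_const.div_sq_sub_add_sq m hd.ne').intervalIntegrable _ _)]
    ring
  have htop : Tendsto (fun R : ℝ => arctan ((R - m) / d)) atTop (𝓝 (π / 2)) :=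
    (tendsto_arctan_atTop.mono_right nhdsWithin_le_nhds).comp
      ((tendsto_atTop_add_const_right _ _ tendsto_id).atTop_div_const hd)
  have hbot : Tendsto (fun R : ℝ => arctan ((-R - m) / d)) atTop (𝓝 (-(π / 2))) :=
    (tendsto_arctan_atBot.mono_right nhdsWithin_le_nhds).comp
      ((tendsto_atBot_add_const_right _ _ tendsto_neg_atTop_atBot).atBot_div_const hd)
  simp only [hint]
  convert (htop.sub hbot).div_const d using 2
  ring

theorem tendsto_integral_linear_div_sq_sub_add_sq (p r m : ℝ) {d : ℝ} (hd : 0 < d) :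
    Tendsto (fun R : ℝ => ∫ ξ in (-R)..R, (p * ξ + r) / ((ξ - m) ^ 2 + d ^ 2)) atTop
      (𝓝 ((p * m + r) * π / d)) := by
  have hsplit (ξ : ℝ) : (p * ξ + r) / ((ξ - m) ^ 2 + d ^ 2) =
      p * ((ξ - m) / ((ξ - m) ^ 2 + d ^ 2)) + (p * m + r) * (1 / ((ξ - m) ^ 2 + d ^ 2)) := by
    field_simp
    ring
  have hodd : Continuous fun ξ : ℝ => (ξ - m) / ((ξ - m) ^ 2 + d ^ 2) :=
    (continuous_sub_right m).div_sq_sub_add_sq m hd.ne'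
  have heven : Continuous fun ξ : ℝ => 1 / ((ξ - m) ^ 2 + d ^ 2) :=
    continuous_const.div_sq_sub_add_sq m hd.ne'
  have hint (R : ℝ) : ∫ ξ in (-R)..R, (p * ξ + r) / ((ξ - m) ^ 2 + d ^ 2) =
      p * (∫ ξ in (-R)..R, (ξ - m) / ((ξ - m) ^ 2 + d ^ 2)) +
        (p * m + r) * ∫ ξ in (-R)..R, 1 / ((ξ - m) ^ 2 + d ^ 2) := by
    simp only [hsplit]
    rw [intervalIntegral.integral_add ((hodd.intervalIntegrable _ _).const_mul _)
      ((heven.intervalIntegrable _ _).const_mul _), intervalIntegral.integral_const_mul,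
      intervalIntegral.integral_const_mul]
  have h := ((tendsto_integral_sub_div_sq_sub_add_sq m hd.ne').const_mul p).add
    ((tendsto_integral_one_div_sq_sub_add_sq m hd).const_mul (p * m + r))
  rw [mul_zero, zero_add, ← mul_div_assoc] at h
  exact h.congr fun R => (hint R).symm

theorem intervalIntegral.integral_add_comp_neg {E : Type*} [NormedAddCommGroup E]
    [NormedSpace ℝ E] {f : ℝ → E} {R : ℝ} (hf : IntervalIntegrable f volume (-R) R) :
    ∫ ξ in (-R)..R, (f ξ + f (-ξ)) = 2 • ∫ ξ in (-R)..R, f ξ := by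
  have hf_neg : IntervalIntegrable (fun ξ => f (-ξ)) volume (-R) R := by
    simpa using ((IntervalIntegrable.iff_comp_neg).mp hf).symm
  rw [intervalIntegral.integral_add hf hf_neg, intervalIntegral.integral_comp_neg, neg_neg,
    two_nsmul]

lemma div_quadratic_eq_div_sq_sub_add_sq (a c ξ : ℝ) (hc : c ≠ 0) :
    (-(2 * a * c * ξ) - 2 * c ^ 2) / ((1 + a ^ 2) * ξ ^ 2 + 4 * a * c * ξ + 4 * c ^ 2) =
      (-(2 * a * c / (1 + a ^ 2)) * ξ + -(2 * c ^ 2 / (1 + a ^ 2))) /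
        ((ξ - -(2 * a * c / (1 + a ^ 2))) ^ 2 + (2 * c / (1 + a ^ 2)) ^ 2) := by
  have hA : 0 < 1 + a ^ 2 := by positivity
  have hsquare : (1 + a ^ 2) * ξ ^ 2 + 4 * a * c * ξ + 4 * c ^ 2 = (1 + a ^ 2) *
      ((ξ - -(2 * a * c / (1 + a ^ 2))) ^ 2 + (2 * c / (1 + a ^ 2)) ^ 2) := by
    field_simp
    ring
  rw [hsquare, ← div_div]
  congr 1
  field_simp
  ring

/-- the explicit principal value computation
`(1/2π) PV ∫ (−2acξ−2c²)/((1+a²)ξ²+4acξ+4c²) + (2acξ−2c²)/((1+a²)ξ²−4acξ+4c²) dξ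
  = −c(1−a²)/(1+a²)`. -/
theorem pv_integral_computation (a c : ℝ) (hc : 0 < c) :
    Tendsto (fun R : ℝ => (1 / (2 * π)) * ∫ ξ in (-R)..R,
        ((-(2 * a * c * ξ) - 2 * c ^ 2) / ((1 + a ^ 2) * ξ ^ 2 + 4 * a * c * ξ + 4 * c ^ 2) +
          (2 * a * c * ξ - 2 * c ^ 2) / ((1 + a ^ 2) * ξ ^ 2 - 4 * a * c * ξ + 4 * c ^ 2)))
      atTop (𝓝 (-(c * (1 - a ^ 2) / (1 + a ^ 2)))) := by
  set f : ℝ → ℝ := fun ξ =>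
    (-(2 * a * c * ξ) - 2 * c ^ 2) / ((1 + a ^ 2) * ξ ^ 2 + 4 * a * c * ξ + 4 * c ^ 2)
  have hf_neg (ξ : ℝ) : (2 * a * c * ξ - 2 * c ^ 2) /
      ((1 + a ^ 2) * ξ ^ 2 - 4 * a * c * ξ + 4 * c ^ 2) = f (-ξ) := by
    simp only [f]
    congr 1 <;> ring
  have hf_eq : f = _ := funext fun ξ => div_quadratic_eq_div_sq_sub_add_sq a c ξ hc.ne'
  have hd : 0 < 2 * c / (1 + a ^ 2) := by positivity
  have hf_cont : Continuous f := by
    rw [hf_eq]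
    exact (continuous_const.mul continuous_id |>.add continuous_const).div_sq_sub_add_sq _ hd.ne'
  have hlim := (tendsto_integral_linear_div_sq_sub_add_sq (-(2 * a * c / (1 + a ^ 2)))
    (-(2 * c ^ 2 / (1 + a ^ 2))) (-(2 * a * c / (1 + a ^ 2))) hd).const_mul (1 / π)
  rw [← hf_eq] at hlim
  convert hlim using 2 with R
  · simp only [hf_neg]
    rw [intervalIntegral.integral_add_comp_neg (hf_cont.intervalIntegrable _ _), nsmul_eq_mul,
      Nat.cast_ofNat]
    field_simp
  · field_simp
    ring
end
end

section
/- Let z(s,t) be a curve with ‖∂_s z(·,t)‖_{L^∞} ≤ M for all t, and let c > 0. Define Ψ_t(ξ,s) := Δ_sing Φ(tξ,s,t) = −4c²(4c² + (1−3Z_t²)ξ²) / ((1+Z₀²)(ξ²+(Z_tξ+2c)²)(ξ²+(Z_tξ−2c)²)), where Z_t and Z₀ are evaluated at (tξ,s). Then there is a constant C depending only on M and c such that |Ψ_t(ξ,s)| ≤ C/(1+ξ²) for all ξ, s ∈ ℝ and t > 0. In particular this uses the lower bound ξ² + (Zξ ± 2c)² ≥ 4c²/(1+Z²), valid for all ξ,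 Z ∈ ℝ. -/
noncomputable section

open Real MeasureTheory Filter Topology Set
open scoped ENNReal

/-! By the mean value theorem `|Z_t| ≤ M`. Each factor `ξ² + (Z_t ξ ± 2c)²` of the denominator
is at least `ξ²` and, by Cauchy–Schwarz, at least `4c²/(1+Z_t²) ≥ 4c²/(1+M²)`, hence at least a
constant multiple of `1 + ξ²`; the numerator is at most a constant multiple of `1 + ξ²`. -/

/-- Cauchy–Schwarz applied to `a = (Z ξ + a) - Z ξ`. -/
theorem sq_div_one_add_sq_le (ξ Z a : ℝ) :
    a ^ 2 / (1 + Z ^ 2) ≤ ξ ^ 2 + (Z * ξ + a) ^ 2 := by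
  rw [div_le_iff₀ (by positivity)]
  nlinarith [sq_nonneg (ξ + Z * (Z * ξ + a))]

theorem abs_Zof_le {f : ℝ → ℝ} {M : ℝ} (hf : Differentiable ℝ f)
    (hM : ∀ x, |deriv f x| ≤ M) (ξ s : ℝ) : |Zof f ξ s| ≤ M := by
  rcases eq_or_ne ξ 0 with rfl | hξ
  · simpa [Zof] using (abs_nonneg _).trans (hM 0)
  have hmvt : |f s - f (s - ξ)| ≤ M * |s - (s - ξ)| := by
    simpa using convex_univ.norm_image_sub_le_of_norm_deriv_le
      (fun x _ => hf.differentiableAt) (fun x _ => hM x) (mem_univ (s - ξ)) (mem_univ s)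
  rw [Zof, abs_div, div_le_iff₀ (abs_pos.mpr hξ)]
  simpa using hmvt

theorem min_mul_one_add_sq_le {Z M : ℝ} (hZ : |Z| ≤ M) (ξ a : ℝ) :
    min 1 (a ^ 2 / (1 + M ^ 2)) * (1 + ξ ^ 2) ≤ 2 * (ξ ^ 2 + (Z * ξ + a) ^ 2) := by
  have hZM : Z ^ 2 ≤ M ^ 2 := sq_le_sq' (abs_le.mp hZ).1 (abs_le.mp hZ).2
  have hfar : a ^ 2 / (1 + M ^ 2) ≤ ξ ^ 2 + (Z * ξ + a) ^ 2 :=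
    (div_le_div_of_nonneg_left (sq_nonneg a) (by positivity) (by linarith)).trans
      (sq_div_one_add_sq_le ξ Z a)
  have hmin₁ : min 1 (a ^ 2 / (1 + M ^ 2)) * ξ ^ 2 ≤ ξ ^ 2 :=
    mul_le_of_le_one_left (sq_nonneg ξ) (min_le_left _ _)
  nlinarith [min_le_right 1 (a ^ 2 / (1 + M ^ 2)), sq_nonneg (Z * ξ + a)]

theorem abs_numerator_le {Z M : ℝ} (hZ : |Z| ≤ M) (ξ b : ℝ) (hb : 0 ≤ b) :
    |b + (1 - 3 * Z ^ 2) * ξ ^ 2| ≤ (b + 1 + 3 * M ^ 2) * (1 + ξ ^ 2) := by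
  have hZM : Z ^ 2 ≤ M ^ 2 := sq_le_sq' (abs_le.mp hZ).1 (abs_le.mp hZ).2
  have hξ := sq_nonneg ξ
  rw [abs_le]
  constructor <;> nlinarith [mul_le_mul_of_nonneg_right hZM hξ, mul_nonneg (sq_nonneg Z) hξ]

theorem exists_abs_singular_weight_le {c : ℝ} (hc : 0 < c) (M : ℝ) :
    ∃ C : ℝ, 0 < C ∧ ∀ Z Z₀ ξ : ℝ, |Z| ≤ M →
      |(-(4 * c ^ 2) * (4 * c ^ 2 + (1 - 3 * Z ^ 2) * ξ ^ 2)) /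
          ((1 + Z₀ ^ 2) * (ξ ^ 2 + (Z * ξ + 2 * c) ^ 2) * (ξ ^ 2 + (Z * ξ - 2 * c) ^ 2))|
        ≤ C / (1 + ξ ^ 2) := by
  set K := 4 * c ^ 2 + 1 + 3 * M ^ 2
  set μ := min 1 (4 * c ^ 2 / (1 + M ^ 2))
  have hμ : 0 < μ := lt_min one_pos (by positivity)
  have hK : 0 < K := by positivity
  refine ⟨16 * c ^ 2 * K / μ ^ 2, by positivity, fun Z Z₀ ξ hZ => ?_⟩
  set A := ξ ^ 2 + (Z * ξ + 2 * c) ^ 2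
  set B := ξ ^ 2 + (Z * ξ - 2 * c) ^ 2
  have h4 : (2 * c) ^ 2 = 4 * c ^ 2 := by ring
  have hA : μ * (1 + ξ ^ 2) ≤ 2 * A := by
    have := min_mul_one_add_sq_le hZ ξ (2 * c)
    rwa [h4] at this
  have hB : μ * (1 + ξ ^ 2) ≤ 2 * B := by
    have := min_mul_one_add_sq_le hZ ξ (-(2 * c))
    rwa [neg_sq, h4, ← sub_eq_add_neg] at this
  have hlow : 0 < μ * (1 + ξ ^ 2) := by positivity
  have hAB : (μ * (1 + ξ ^ 2)) ^ 2 / 4 ≤ (1 + Z₀ ^ 2) * A * B := by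
    nlinarith [mul_le_mul hA hB hlow.le (by linarith), sq_nonneg Z₀,
      mul_pos (by linarith : 0 < A) (by linarith : 0 < B)]
  have hnum : |-(4 * c ^ 2) * (4 * c ^ 2 + (1 - 3 * Z ^ 2) * ξ ^ 2)|
      ≤ 4 * c ^ 2 * (K * (1 + ξ ^ 2)) := by
    rw [abs_mul, abs_neg, abs_of_pos (by positivity)]
    exact mul_le_mul_of_nonneg_left (abs_numerator_le hZ ξ _ (by positivity)) (by positivity)
  calc _ ≤ 4 * c ^ 2 * (K * (1 + ξ ^ 2)) / ((μ * (1 + ξ ^ 2)) ^ 2 / 4) := by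
        rw [abs_div, abs_of_pos (hAB.trans_lt' (by positivity))]
        exact div_le_div₀ (by positivity) hnum (by positivity) hAB
    _ = 16 * c ^ 2 * K / μ ^ 2 / (1 + ξ ^ 2) := by
        field_simp
        norm_num

/-- the uniform bound `|Ψ_t(ξ,s)| ≤ C/(1+ξ²)` for the rescaled singular
weight `Ψ_t(ξ,s) = Δ_sing Φ(tξ,s,t)`, together with the elementary lower bound
`ξ² + (Zξ ± 2c)² ≥ 4c²/(1+Z²)`. -/
theorem rescaled_singular_weight_bound
    (z : ℝ → ℝ → ℝ) (M c : ℝ) (hc : 0 < c)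
    (hdiff : ∀ t : ℝ, Differentiable ℝ fun s => z s t)
    (hM : ∀ t s : ℝ, |deriv (fun s' => z s' t) s| ≤ M) :
    (∀ ξ Z : ℝ, 4 * c ^ 2 / (1 + Z ^ 2) ≤ ξ ^ 2 + (Z * ξ + 2 * c) ^ 2 ∧
        4 * c ^ 2 / (1 + Z ^ 2) ≤ ξ ^ 2 + (Z * ξ - 2 * c) ^ 2) ∧
    ∃ C : ℝ, 0 < C ∧ ∀ t, 0 < t → ∀ ξ s : ℝ,
      |(-(4 * c ^ 2) * (4 * c ^ 2 + (1 - 3 * (Zfun z t (t * ξ) s) ^ 2) * ξ ^ 2)) /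
          ((1 + (Zfun z 0 (t * ξ) s) ^ 2) *
            (ξ ^ 2 + (Zfun z t (t * ξ) s * ξ + 2 * c) ^ 2) *
            (ξ ^ 2 + (Zfun z t (t * ξ) s * ξ - 2 * c) ^ 2))| ≤ C / (1 + ξ ^ 2) := by
  have h4 : (2 * c) ^ 2 = 4 * c ^ 2 := by ring
  refine ⟨fun ξ Z => ⟨?_, ?_⟩, ?_⟩
  · simpa only [h4] using sq_div_one_add_sq_le ξ Z (2 * c)
  · simpa only [neg_sq, h4, ← sub_eq_add_neg] using sq_div_one_add_sq_le ξ Z (-(2 * c))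
  obtain ⟨C, hC, hbound⟩ := exists_abs_singular_weight_le hc M
  exact ⟨C, hC, fun t _ ξ s => hbound _ _ ξ (abs_Zof_le (hdiff t) (hM t) (t * ξ) s)⟩
end
end
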